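/- arXiv:2112.02527 — 3 statements merged into one kernel-verified Lean document; each statement's English description precedes it below -/
import Mathlib

section
/- For a connected graph G of order n whose distance Laplacian eigenvalues are ρ^L_1 ≥ ... ≥ ρ^L_n = 0 and Wiener index W(G), the distance Laplacian energy satisfies DLE(G) = 2·max_{1≤j≤n} ( Σ_{i=1}^j ρ^L_i − 2jW(G)/n ). -/
open Finset Matrix BigOperators

variable {V : Type*} [Fintype V] [DecidableEq V]

/-- The transmission of a vertex: the sum of distances to all other vertices. -/
noncomputable def transmission (G : SimpleGraph V) (v : V) : ℕ := ∑ u, G.dist v u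

/-- The distance matrix of a graph. -/
noncomputable def distMatrix (G : SimpleGraph V) : Matrix V V ℝ :=
  fun u v => (G.dist u v : ℝ)

/-- The distance Laplacian matrix `Tr(G) - D(G)`. -/
noncomputable def distLap (G : SimpleGraph V) : Matrix V V ℝ :=
  Matrix.diagonal (fun v => (transmission G v : ℝ)) - distMatrix G

/-- The Wiener index of a graph. -/
noncomputable def wiener (G : SimpleGraph V) : ℝ := (∑ v, (transmission G v : ℝ)) / 2

/-- `ρ` lists the eigenvalues of the (Hermitian) matrix `M` in nonincreasing order. -/
def IsSpectrum {n : ℕ} (M : Matrix (Fin n) (Fin n) ℝ) (ρ : Fin n → ℝ) : Prop :=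
  Antitone ρ ∧ ∃ (hM : M.IsHermitian) (e : Fin n ≃ Fin n), ∀ i, ρ i = hM.eigenvalues (e i)

/-- Distance Laplacian energy, given the eigenvalue list `ρ`. -/
noncomputable def DLEnergy {n : ℕ} (G : SimpleGraph (Fin n)) (ρ : Fin n → ℝ) : ℝ :=
  ∑ i, |ρ i - 2 * wiener G / n|

/-- The graph has diameter two. -/
def diamTwo (G : SimpleGraph V) : Prop :=
  (∀ u v, G.dist u v ≤ 2) ∧ ∃ u v, G.dist u v = 2

/-- The multiset of eigenvalues of a Hermitian matrix. -/
noncomputable def eigMultiset (M : Matrix V V ℝ) (hM : M.IsHermitian) : Multiset ℝ :=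
  Finset.univ.val.map hM.eigenvalues

/-! Centre the spectrum: `x i = ρ i - 2W/n` is nonincreasing and sums to `0`, because the
eigenvalues sum to `tr D^L = 2W`. For such a vector `∑ |x i| = 2 ∑ (x i)⁺`, and since `x` is
nonincreasing its positive entries form an initial segment, so `∑ (x i)⁺` is the largest prefix
sum of `x`. -/

section PrefixSums

variable {α : Type*} [AddCommGroup α] [LinearOrder α]

lemma sum_abs_eq_two_nsmul_sum_posPart [IsOrderedAddMonoid α] {ι : Type*} (s : Finset ι)
    (x : ι → α) (hx : ∑ i ∈ s, x i = 0) : ∑ i ∈ s, |x i| = 2 • ∑ i ∈ s, (x i)⁺ := by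
  have hsum : ∑ i ∈ s, |x i| = ∑ i ∈ s, (x i)⁺ + ∑ i ∈ s, (x i)⁻ := by
    simp only [← sum_add_distrib, posPart_add_negPart]
  have hdiff : ∑ i ∈ s, (x i)⁺ - ∑ i ∈ s, (x i)⁻ = 0 := by
    simpa only [← sum_sub_distrib, posPart_sub_negPart] using hx
  rw [hsum, eq_of_sub_eq_zero hdiff, two_nsmul]

lemma sum_le_sum_posPart_of_subset [IsOrderedAddMonoid α] {ι : Type*} {s t : Finset ι}
    (hst : s ⊆ t) (x : ι → α) :
    ∑ i ∈ s, x i ≤ ∑ i ∈ t, (x i)⁺ :=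
  calc ∑ i ∈ s, x i ≤ ∑ i ∈ s, (x i)⁺ := sum_le_sum fun i _ => le_posPart (x i)
    _ ≤ ∑ i ∈ t, (x i)⁺ := sum_le_sum_of_subset_of_nonneg hst fun i _ _ => posPart_nonneg (x i)

lemma Antitone.sum_filter_val_lt_card_pos_eq_sum_posPart {n : ℕ} {x : Fin n → α}
    (hx : Antitone x) :
    ∑ i ∈ univ.filter (fun i : Fin n => (i : ℕ) < #{i | 0 < x i}), x i = ∑ i, (x i)⁺ := by
  have hinit : univ.filter (fun i : Fin n => (i : ℕ) < #{i | 0 < x i})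
      = univ.filter (fun i => 0 < x i) := by
    ext i
    simpa using Fin.lt_card_filter_univ_iff_apply_of_imp (j := i) (fun i => 0 < x i)
      fun i j hji hi => hi.trans_le (hx hji)
  rw [hinit, sum_filter]
  simp only [posPart_eq_ite_lt]

lemma Antitone.sup'_sum_filter_val_lt_eq_sum_posPart [IsOrderedAddMonoid α] {n : ℕ}
    (hn : 1 ≤ n) {x : Fin n → α} (hx : Antitone x) (hx0 : ∑ i, x i = 0) :
    (Icc 1 n).sup' (nonempty_Icc.mpr hn)
      (fun j => ∑ i ∈ univ.filter (fun i : Fin n => (i : ℕ) < j), x i) = ∑ i, (x i)⁺ := by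
  refine le_antisymm (sup'_le _ _ fun j _ => sum_le_sum_posPart_of_subset (subset_univ _) x) ?_
  rw [← hx.sum_filter_val_lt_card_pos_eq_sum_posPart]
  obtain hk | hk := Nat.eq_zero_or_pos #{i | 0 < x i}
  · -- no positive entries: the empty prefix sum is not available, but the full one is also `0`
    refine le_sup'_of_le _ (right_mem_Icc.mpr hn) ?_
    simp [hk, hx0]
  · exact le_sup'_of_le _ (mem_Icc.mpr ⟨hk, (card_filter_le _ _).trans_eq (card_fin n)⟩) le_rfl

theorem Antitone.sum_abs_eq_two_nsmul_sup'_sum_filter_val_lt [IsOrderedAddMonoid α] {n : ℕ}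
    (hn : 1 ≤ n) {x : Fin n → α} (hx : Antitone x) (hx0 : ∑ i, x i = 0) :
    ∑ i, |x i| = 2 • (Icc 1 n).sup' (nonempty_Icc.mpr hn)
      (fun j => ∑ i ∈ univ.filter (fun i : Fin n => (i : ℕ) < j), x i) := by
  rw [sum_abs_eq_two_nsmul_sum_posPart _ _ hx0, hx.sup'_sum_filter_val_lt_eq_sum_posPart hn hx0]

end PrefixSums

lemma sum_filter_val_lt_sub_const {R : Type*} [Ring R] {n j : ℕ} (hj : j ≤ n) (ρ : Fin n → R)
    (c : R) :
    ∑ i ∈ univ.filter (fun i : Fin n => (i : ℕ) < j), (ρ i - c)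
      = ∑ i ∈ univ.filter (fun i : Fin n => (i : ℕ) < j), ρ i - j * c := by
  rw [sum_sub_distrib, sum_const, Fin.card_filter_val_lt, min_eq_right hj, nsmul_eq_mul]

lemma trace_distLap (G : SimpleGraph V) : (distLap G).trace = 2 * wiener G := by
  have hdiag : (distMatrix G).trace = 0 := by simp [Matrix.trace, distMatrix]
  rw [distLap, trace_sub, trace_diagonal, hdiag, sub_zero, wiener, mul_div_cancel₀ _ two_ne_zero]

lemma IsSpectrum.sum_eq_trace {n : ℕ} {M : Matrix (Fin n) (Fin n) ℝ} {ρ : Fin n → ℝ}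
    (hρ : IsSpectrum M ρ) : ∑ i, ρ i = M.trace := by
  obtain ⟨-, hM, e, he⟩ := hρ
  simp [he, Equiv.sum_comp e hM.eigenvalues, hM.trace_eq_sum_eigenvalues]

theorem stmt3_general {n : ℕ} (hn : 1 ≤ n) (G : SimpleGraph (Fin n))
    (ρ : Fin n → ℝ) (hρ : IsSpectrum (distLap G) ρ) :
    DLEnergy G ρ = 2 * (Finset.Icc 1 n).sup' (Finset.nonempty_Icc.mpr hn)
      (fun j => (∑ i ∈ Finset.univ.filter (fun i : Fin n => (i : ℕ) < j), ρ i)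
        - 2 * (j : ℝ) * wiener G / n) := by
  set c := 2 * wiener G / n
  have hcentred : ∑ i, (ρ i - c) = 0 := by
    have hn0 : (n : ℝ) ≠ 0 := by exact_mod_cast Nat.one_le_iff_ne_zero.mp hn
    rw [sum_sub_distrib, hρ.sum_eq_trace, trace_distLap, sum_const, card_univ, Fintype.card_fin,
      nsmul_eq_mul, mul_div_cancel₀ _ hn0, sub_self]
  have hanti : Antitone fun i => ρ i - c := fun i j hij => sub_le_sub_right (hρ.1 hij) c
  rw [DLEnergy, hanti.sum_abs_eq_two_nsmul_sup'_sum_filter_val_lt hn hcentred, two_nsmul, ← two_mul]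
  refine congrArg (2 * ·) (sup'_congr _ rfl fun j hj => ?_)
  rw [sum_filter_val_lt_sub_const (mem_Icc.mp hj).2]
  ring

theorem stmt3 {n : ℕ} (hn : 1 ≤ n) (G : SimpleGraph (Fin n)) (hconn : G.Connected)
    (ρ : Fin n → ℝ) (hρ : IsSpectrum (distLap G) ρ) :
    DLEnergy G ρ = 2 * (Finset.Icc 1 n).sup' (Finset.nonempty_Icc.mpr hn)
      (fun j => (∑ i ∈ Finset.univ.filter (fun i : Fin n => (i : ℕ) < j), ρ i)
        - 2 * (j : ℝ) * wiener G / n) :=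
  stmt3_general hn G ρ hρ
end

section
/- Let G be a connected graph of order n ≥ 3 and size m having diameter 2, let σ be the number of distance Laplacian eigenvalues ≥ 2W(G)/n and t the number of Laplacian eigenvalues ≥ 2m/n (with 1 ≤ σ, t ≤ n−2). Then LE(G) − 2(2m/n − 2(n−1) + 2t) ≤ DLE(G) ≤ LE(G) + 4(σ − m/n). -/
open Finset Matrix BigOperators

variable {V : Type*} [Fintype V] [DecidableEq V]

/-! For a connected graph of diameter at most two, `D = 2(J - I) - A`, so the distance Laplacian
is `2n I - 2J - L`. An orthonormal eigenbasis of `L` contains a constant vector (eigenvalue `0`),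
and `J` kills the other basis vectors, which are orthogonal to it. Hence the distance Laplacian
spectrum consists of `0` and of `2n - μ` for the remaining Laplacian eigenvalues `μ`, while
`2W/n = 2(n - 1) - 2m/n`. Each remaining term of `DLE` is then `|μ - (2m/n + 2)|`; it exceeds
the matching term `|μ - 2m/n|` of `LE` by at most `2`, is smaller by exactly `2` when
`μ > 2m/n + 2`, and larger by exactly `2` when `μ < 2m/n`. Counting these cases gives `σ` and
`t`. -/

section AbsShift
variable (R : Multiset ℝ) (c : ℝ) {δ : ℝ}

lemma Multiset.sum_map_abs_sub_add_le (hδ : 0 ≤ δ) :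
    (R.map fun x => |x - (c + δ)|).sum ≤
      (R.map fun x => |x - c|).sum + 2 * δ * R.countP (· ≤ c + δ) - δ * Multiset.card R := by
  induction R using Multiset.induction_on with
  | empty => simp
  | cons x R ih =>
    simp only [Multiset.map_cons, Multiset.sum_cons, Multiset.countP_cons, Multiset.card_cons]
    have := abs_sub_abs_le_abs_sub (x - (c + δ)) (x - c)
    rw [show x - (c + δ) - (x - c) = -δ by ring, abs_neg, abs_of_nonneg hδ] at this
    split_ifs with hx
    · push_cast; linarith
    · rw [abs_of_pos (by linarith : 0 < x - (c + δ)), abs_of_pos (by linarith : 0 < x - c)]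
      push_cast; linarith

lemma Multiset.sum_map_abs_sub_le_add (hδ : 0 ≤ δ) :
    (R.map fun x => |x - c|).sum + δ * Multiset.card R - 2 * δ * R.countP (c ≤ ·) ≤
      (R.map fun x => |x - (c + δ)|).sum := by
  induction R using Multiset.induction_on with
  | empty => simp
  | cons x R ih =>
    simp only [Multiset.map_cons, Multiset.sum_cons, Multiset.countP_cons, Multiset.card_cons]
    have := abs_sub_abs_le_abs_sub (x - c) (x - (c + δ))
    rw [show x - c - (x - (c + δ)) = δ by ring, abs_of_nonneg hδ] at this
    split_ifs with hx
    · push_cast; linarith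
    · rw [abs_of_neg (by linarith : x - (c + δ) < 0), abs_of_neg (by linarith : x - c < 0)]
      push_cast; linarith

end AbsShift

theorem energy_bounds_of_reflected_spectrum (R : Multiset ℝ) {N c : ℝ} (hc : 0 < c)
    (hθ : 0 < 2 * (N - 1) - c) (hR : (Multiset.card R : ℝ) = N - 1) :
    ((0 ::ₘ R).map (|· - c|)).sum - 2 * (c - 2 * (N - 1) + 2 * (0 ::ₘ R).countP (c ≤ ·)) ≤
        ((0 ::ₘ R.map (2 * N - ·)).map (|· - (2 * (N - 1) - c)|)).sum ∧
      ((0 ::ₘ R.map (2 * N - ·)).map (|· - (2 * (N - 1) - c)|)).sum ≤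
        ((0 ::ₘ R).map (|· - c|)).sum +
          4 * ((0 ::ₘ R.map (2 * N - ·)).countP (2 * (N - 1) - c ≤ ·) - c / 2) := by
  have hreflect : (R.map (2 * N - ·)).map (|· - (2 * (N - 1) - c)|) = R.map (|· - (c + 2)|) := by
    rw [Multiset.map_map]
    refine Multiset.map_congr rfl fun x _ => ?_
    rw [Function.comp_apply, ← abs_neg]
    ring_nf
  have hcount : (R.map (2 * N - ·)).countP (2 * (N - 1) - c ≤ ·) = R.countP (· ≤ c + 2) := by
    rw [Multiset.countP_map, ← Multiset.countP_eq_card_filter]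
    exact Multiset.countP_congr rfl fun x _ =>
      propext ⟨fun h => by linarith, fun h => by linarith⟩
  have hup := R.sum_map_abs_sub_add_le c zero_le_two
  have hlow := R.sum_map_abs_sub_le_add c zero_le_two
  simp only [Multiset.map_cons, Multiset.sum_cons, Multiset.countP_cons, hreflect, hcount,
    zero_sub, abs_neg, abs_of_pos hc, abs_of_pos hθ, if_neg hc.not_ge, if_neg hθ.not_ge,
    add_zero, hR] at hup hlow ⊢
  constructor <;> linarith

open Polynomial in
lemma eigMultiset_eq_of_orthonormalBasis {A : Matrix V V ℝ} (hA : A.IsHermitian)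
    (B : OrthonormalBasis V ℝ (EuclideanSpace ℝ V)) (d : V → ℝ)
    (hB : ∀ i, A *ᵥ ⇑(B i) = d i • ⇑(B i)) :
    eigMultiset A hA = univ.val.map d := by
  let U : Matrix V V ℝ := (EuclideanSpace.basisFun V ℝ).toBasis.toMatrix B.toBasis
  have hU : U ∈ unitaryGroup V ℝ :=
    (EuclideanSpace.basisFun V ℝ).toMatrix_orthonormalBasis_mem_unitary B
  have hAU : A * U = U * diagonal d := by
    ext i j
    rw [mul_diagonal, mul_comm]
    exact congrFun (hB j) i
  have hA_eq : A = U * (diagonal d * star U) := by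
    rw [← mul_assoc, ← hAU, mul_assoc, (mem_unitaryGroup_iff).mp hU, mul_one]
  have hcharpoly : A.charpoly = ∏ i, (X - C (d i)) := by
    rw [hA_eq, charpoly_mul_comm, mul_assoc, (mem_unitaryGroup_iff').mp hU, mul_one,
      charpoly_diagonal]
  have := hA.roots_charpoly_eq_eigenvalues
  rw [hcharpoly, roots_prod _ _ (prod_ne_zero_iff.mpr fun i _ => X_sub_C_ne_zero (d i))] at this
  simpa [eigMultiset] using this.symm

lemma IsSpectrum.map_univ_val_eq {n : ℕ} {M : Matrix (Fin n) (Fin n) ℝ} {ρ : Fin n → ℝ}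
    (hρ : IsSpectrum M ρ) (hM : M.IsHermitian) : univ.val.map ρ = eigMultiset M hM := by
  obtain ⟨-, _, e, he⟩ := hρ
  have : univ.val.map ρ = (univ.val.map e).map hM.eigenvalues := by
    rw [Multiset.map_map]
    exact congrArg (Multiset.map · univ.val) (funext he)
  rw [this, Multiset.map_univ_val_equiv]
  rfl

lemma sum_comp_eq_sum_map_univ_val {ι : Type*} [Fintype ι] (ρ : ι → ℝ) (f : ℝ → ℝ) :
    ∑ i, f (ρ i) = ((univ.val.map ρ).map f).sum := by
  rw [Multiset.map_map]
  rfl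

lemma card_filter_comp_eq_countP {ι : Type*} [Fintype ι] (ρ : ι → ℝ) (p : ℝ → Prop)
    [DecidablePred p] : #(univ.filter fun i => p (ρ i)) = (univ.val.map ρ).countP p :=
  (Multiset.countP_map ρ univ.val p).symm

namespace SimpleGraph

lemma dist_eq_of_dist_le_two {α : Type*} [DecidableEq α] (G : SimpleGraph α) [DecidableRel G.Adj]
    (hconn : G.Connected) (hdiam : ∀ u v, G.dist u v ≤ 2) (u v : α) :
    G.dist u v = if u = v then 0 else if G.Adj u v then 1 else 2 := by
  split_ifs with huv hadj
  · rw [huv, dist_self]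
  · exact dist_eq_one_iff_adj.mpr hadj
  · have := hconn.pos_dist_of_ne huv
    have := hdiam u v
    have : G.dist u v ≠ 1 := fun h => hadj (dist_eq_one_iff_adj.mp h)
    omega

lemma wiener_pos {α : Type*} [Fintype α] {G : SimpleGraph α} {u v : α}
    (huv : G.dist u v ≠ 0) : 0 < wiener G := by
  have hu : (G.dist u v : ℝ) ≤ transmission G u := by
    exact_mod_cast single_le_sum (fun w _ => Nat.zero_le (G.dist u w)) (mem_univ v)
  have hsum : (transmission G u : ℝ) ≤ ∑ w, (transmission G w : ℝ) :=
    single_le_sum (fun w _ => Nat.cast_nonneg _) (mem_univ u)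
  have : (0 : ℝ) < G.dist u v := by positivity
  rw [wiener]
  linarith

variable (G : SimpleGraph V) [DecidableRel G.Adj]

lemma transmission_eq_of_dist_le_two (hconn : G.Connected) (hdiam : ∀ u v, G.dist u v ≤ 2)
    (v : V) : (transmission G v : ℝ) = 2 * Fintype.card V - 2 - G.degree v := by
  have hdist (u : V) : (G.dist v u : ℝ) =
      2 - 2 * (if v = u then 1 else 0) - (if G.Adj v u then 1 else 0) := by
    rw [G.dist_eq_of_dist_le_two hconn hdiam]
    split_ifs with h₁ h₂ <;> norm_num
    exact G.loopless.irrefl _ (h₁ ▸ h₂)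
  simp only [transmission, Nat.cast_sum, hdist, sum_sub_distrib, ← mul_sum, sum_ite_eq,
    mem_univ, if_true, ← degree_eq_sum_if_adj, sum_const, card_univ, nsmul_eq_mul]
  ring

lemma wiener_eq_of_dist_le_two (hconn : G.Connected) (hdiam : ∀ u v, G.dist u v ≤ 2) :
    wiener G = Fintype.card V * (Fintype.card V - 1) - #G.edgeFinset := by
  have hdeg : ∑ v, (G.degree v : ℝ) = 2 * #G.edgeFinset := by
    exact_mod_cast G.sum_degrees_eq_twice_card_edges
  simp only [wiener, G.transmission_eq_of_dist_le_two hconn hdiam, sum_sub_distrib, hdeg,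
    sum_const, card_univ, nsmul_eq_mul]
  ring

lemma distLap_eq_of_dist_le_two (hconn : G.Connected) (hdiam : ∀ u v, G.dist u v ≤ 2) :
    distLap G = (2 * Fintype.card V : ℝ) • (1 : Matrix V V ℝ) - (2 : ℝ) • of (fun _ _ => 1) -
      G.lapMatrix ℝ := by
  ext u v
  simp only [distLap, distMatrix, Matrix.sub_apply, Matrix.smul_apply, of_apply, lapMatrix,
    degMatrix, adjMatrix_apply, one_apply, smul_eq_mul]
  by_cases huv : u = v
  · subst huv
    simp [transmission_eq_of_dist_le_two G hconn hdiam]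
  · by_cases hadj : G.Adj u v <;> norm_num [huv, hadj, G.dist_eq_of_dist_le_two hconn hdiam]

lemma distLap_mulVec_of_dist_le_two (hconn : G.Connected) (hdiam : ∀ u v, G.dist u v ≤ 2)
    (x : V → ℝ) (u : V) :
    (distLap G *ᵥ x) u =
      2 * Fintype.card V * x u - 2 * ∑ v, x v - (G.lapMatrix ℝ *ᵥ x) u := by
  rw [G.distLap_eq_of_dist_le_two hconn hdiam, sub_mulVec, sub_mulVec, smul_mulVec,
    smul_mulVec, one_mulVec]
  simp [mulVec, dotProduct]

lemma exists_eigenvectorBasis_eq_const (hconn : G.Connected)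
    (hL : (G.lapMatrix ℝ).IsHermitian) :
    ∃ i₀ a, hL.eigenvalues i₀ = 0 ∧ a ≠ 0 ∧ ∀ u, hL.eigenvectorBasis i₀ u = a := by
  obtain ⟨v₀⟩ := hconn.nonempty
  have : Nonempty V := ⟨v₀⟩
  obtain ⟨i₀, -, hi₀⟩ : ∃ i₀ ∈ univ, hL.eigenvalues i₀ = 0 := by
    apply prod_eq_zero_iff.mp
    exact_mod_cast hL.det_eq_prod_eigenvalues.symm.trans G.det_lapMatrix_eq_zero
  have hker : G.lapMatrix ℝ *ᵥ ⇑(hL.eigenvectorBasis i₀) = 0 := by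
    rw [hL.mulVec_eigenvectorBasis, hi₀, zero_smul]
  have hconst (u : V) : hL.eigenvectorBasis i₀ u = hL.eigenvectorBasis i₀ v₀ :=
    (lapMatrix_mulVec_eq_zero_iff_forall_reachable G).mp hker u v₀ (hconn.preconnected u v₀)
  refine ⟨i₀, _, hi₀, fun h => hL.eigenvectorBasis.orthonormal.ne_zero i₀ ?_, hconst⟩
  ext u
  rw [hconst u, h, PiLp.zero_apply]

theorem exists_eigMultiset_distLap_eq (hconn : G.Connected) (hdiam : ∀ u v, G.dist u v ≤ 2)
    (hL : (G.lapMatrix ℝ).IsHermitian) (hD : (distLap G).IsHermitian) :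
    ∃ R : Multiset ℝ, eigMultiset (G.lapMatrix ℝ) hL = 0 ::ₘ R ∧
      eigMultiset (distLap G) hD = 0 ::ₘ R.map (2 * (Fintype.card V : ℝ) - ·) := by
  obtain ⟨i₀, a, hi₀, ha, hconst⟩ := G.exists_eigenvectorBasis_eq_const hconn hL
  set B := hL.eigenvectorBasis
  have hsum (j : V) (hj : j ≠ i₀) : ∑ v, B j v = 0 := by
    have h := B.orthonormal.2 hj.symm
    simp only [PiLp.inner_apply, RCLike.inner_apply, conj_trivial, hconst] at h
    rw [← sum_mul] at h
    exact (mul_eq_zero.mp h).resolve_right ha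
  let d : V → ℝ := fun i => if i = i₀ then 0 else 2 * Fintype.card V - hL.eigenvalues i
  have hB (i : V) : distLap G *ᵥ ⇑(B i) = d i • ⇑(B i) := by
    ext u
    rw [G.distLap_mulVec_of_dist_le_two hconn hdiam, hL.mulVec_eigenvectorBasis]
    by_cases hi : i = i₀
    · subst hi
      simp only [d, ↓reduceIte, hconst, hi₀, sum_const, card_univ, nsmul_eq_mul,
        Pi.smul_apply, smul_eq_mul, zero_mul, sub_zero]
      ring
    · simp only [d, hi, ↓reduceIte, hsum i hi, mul_zero, sub_zero, Pi.smul_apply, smul_eq_mul]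
      ring
  have huniv : (univ : Finset V).val = i₀ ::ₘ (univ.erase i₀).val := by
    rw [erase_val, Multiset.cons_erase (mem_univ_val i₀)]
  refine ⟨(univ.erase i₀).val.map hL.eigenvalues, ?_, ?_⟩
  · rw [eigMultiset, huniv, Multiset.map_cons, hi₀]
  · rw [eigMultiset_eq_of_orthonormalBasis hD B d hB, huniv, Multiset.map_cons, Multiset.map_map]
    refine congrArg₂ _ (if_pos rfl) (Multiset.map_congr rfl fun i hi => ?_)
    exact if_neg (mem_erase.mp hi).1

end SimpleGraph

theorem stmt4_general {n : ℕ} (G : SimpleGraph (Fin n)) [DecidableRel G.Adj]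
    (hconn : G.Connected) (hdiam : diamTwo G)
    (m : ℕ) (hm : m = G.edgeFinset.card)
    (ρ μ : Fin n → ℝ)
    (hρ : IsSpectrum (distLap G) ρ) (hμ : IsSpectrum (G.lapMatrix ℝ) μ)
    (σ t : ℕ)
    (hσ : σ = (Finset.univ.filter (fun i => 2 * wiener G / n ≤ ρ i)).card)
    (ht : t = (Finset.univ.filter (fun i => 2 * (m : ℝ) / n ≤ μ i)).card)
    (LE : ℝ) (hLE : LE = ∑ i, |μ i - 2 * (m : ℝ) / n|) :
    LE - 2 * (2 * (m : ℝ) / n - 2 * ((n : ℝ) - 1) + 2 * (t : ℝ)) ≤ DLEnergy G ρ ∧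
      DLEnergy G ρ ≤ LE + 4 * ((σ : ℝ) - (m : ℝ) / n) := by
  obtain ⟨hdist, u, v, huv⟩ := hdiam
  have hn : 0 < n := u.pos
  obtain ⟨R, hLR, hDR⟩ := G.exists_eigMultiset_distLap_eq hconn hdist hμ.2.1 hρ.2.1
  rw [← hρ.map_univ_val_eq, Fintype.card_fin] at hDR
  rw [← hμ.map_univ_val_eq] at hLR
  have hcard : (Multiset.card R : ℝ) = n - 1 := by
    have := congrArg Multiset.card hLR
    simp only [Multiset.card_map, card_val, card_univ, Fintype.card_fin, Multiset.card_cons] at this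
    rw [this]; push_cast; ring
  have hW : 2 * wiener G / n = 2 * ((n : ℝ) - 1) - 2 * (m : ℝ) / n := by
    rw [G.wiener_eq_of_dist_le_two hconn hdist, Fintype.card_fin, ← hm]
    field_simp
  have hθ : 0 < 2 * ((n : ℝ) - 1) - 2 * (m : ℝ) / n := by
    have := SimpleGraph.wiener_pos (G := G) (huv.trans_ne two_ne_zero)
    rw [← hW]
    positivity
  have hc : 0 < 2 * (m : ℝ) / n := by
    have : Nontrivial (Fin n) := ⟨u, v, fun h => by simp [h] at huv⟩
    obtain ⟨w, hw⟩ := hconn.preconnected.exists_adj_of_nontrivial u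
    have : 0 < m := hm ▸ card_pos.mpr ⟨s(u, w), G.mem_edgeFinset.mpr hw⟩
    positivity
  rw [DLEnergy, hLE, hσ, ht, hW,
    sum_comp_eq_sum_map_univ_val ρ (|· - (2 * ((n : ℝ) - 1) - 2 * m / n)|),
    sum_comp_eq_sum_map_univ_val μ (|· - 2 * (m : ℝ) / n|),
    card_filter_comp_eq_countP ρ (2 * ((n : ℝ) - 1) - 2 * m / n ≤ ·),
    card_filter_comp_eq_countP μ (2 * (m : ℝ) / n ≤ ·), hDR, hLR]
  have hhalf : 2 * (m : ℝ) / n / 2 = m / n := by ring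
  have hbounds := energy_bounds_of_reflected_spectrum R hc hθ hcard
  rwa [hhalf] at hbounds

theorem stmt4 {n : ℕ} (hn : 3 ≤ n) (G : SimpleGraph (Fin n)) [DecidableRel G.Adj]
    (hconn : G.Connected) (hdiam : diamTwo G)
    (m : ℕ) (hm : m = G.edgeFinset.card)
    (ρ μ : Fin n → ℝ)
    (hρ : IsSpectrum (distLap G) ρ) (hμ : IsSpectrum (G.lapMatrix ℝ) μ)
    (σ t : ℕ)
    (hσ : σ = (Finset.univ.filter (fun i => 2 * wiener G / n ≤ ρ i)).card)
    (ht : t = (Finset.univ.filter (fun i => 2 * (m : ℝ) / n ≤ μ i)).card)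
    (hσ1 : 1 ≤ σ) (hσ2 : σ ≤ n - 2) (ht1 : 1 ≤ t) (ht2 : t ≤ n - 2)
    (LE : ℝ) (hLE : LE = ∑ i, |μ i - 2 * (m : ℝ) / n|) :
    LE - 2 * (2 * (m : ℝ) / n - 2 * ((n : ℝ) - 1) + 2 * (t : ℝ)) ≤ DLEnergy G ρ ∧
      DLEnergy G ρ ≤ LE + 4 * ((σ : ℝ) - (m : ℝ) / n) :=
  stmt4_general G hconn hdiam m hm ρ μ hρ hμ σ t hσ ht LE hLE
end

section
/- If G is a connected graph on n vertices with at least n edges and G′ = G − e is a connected spanning subgraph obtained by deleting an edge, then ρ^L_i(G′) ≥ ρ^L_i(G) for all 1 ≤ i ≤ n, where ρ^L_1 ≥ ... ≥ ρ^L_n are the distance Laplacian eigenvalues. -/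
open Finset Matrix BigOperators

variable {V : Type*} [Fintype V] [DecidableEq V]

/-!
Deleting an edge can only increase distances, so `distLap G' - distLap G` is the Laplacian of the
nonnegative symmetric weights `dist G' u v - dist G u v`, hence positive semidefinite. Weyl's
monotonicity theorem for the Loewner order then compares the ordered eigenvalues termwise.
-/

theorem dotProduct_diagonal_sum_sub_mulVec_nonneg {ι : Type*} [Fintype ι] [DecidableEq ι]
    {W : Matrix ι ι ℝ} (hW : W.IsSymm) (hW₀ : ∀ u v, 0 ≤ W u v) (x : ι → ℝ) :
    0 ≤ x ⬝ᵥ (diagonal (fun v => ∑ u, W v u) - W) *ᵥ x := by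
  have hquad : x ⬝ᵥ (diagonal (fun v => ∑ u, W v u) - W) *ᵥ x
      = ∑ v, ∑ u, W v u * (x v ^ 2 - x v * x u) := by
    rw [sub_mulVec, dotProduct_sub]
    simp only [dotProduct, mulVec_diagonal]
    simp only [mulVec, dotProduct, Finset.mul_sum, Finset.sum_mul, ← Finset.sum_sub_distrib]
    exact Finset.sum_congr rfl fun v _ => Finset.sum_congr rfl fun u _ => by ring
  have hswap : ∑ v, ∑ u, W v u * (x v ^ 2 - x v * x u)
      = ∑ v, ∑ u, W v u * (x u ^ 2 - x u * x v) := by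
    rw [Finset.sum_comm]
    simp only [hW.apply]
  have hsq : 2 * (x ⬝ᵥ (diagonal (fun v => ∑ u, W v u) - W) *ᵥ x)
      = ∑ v, ∑ u, W v u * (x v - x u) ^ 2 := by
    rw [two_mul, hquad]
    nth_rewrite 2 [hswap]
    rw [← Finset.sum_add_distrib]
    exact Finset.sum_congr rfl fun v _ => by rw [← Finset.sum_add_distrib]; congr! 1; ring
  have : 0 ≤ ∑ v, ∑ u, W v u * (x v - x u) ^ 2 :=
    Finset.sum_nonneg fun v _ => Finset.sum_nonneg fun u _ => mul_nonneg (hW₀ v u) (sq_nonneg _)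
  linarith

theorem distLap_sub_distLap (G G' : SimpleGraph V) :
    distLap G' - distLap G = diagonal (fun v => ∑ u, (distMatrix G' - distMatrix G) v u)
      - (distMatrix G' - distMatrix G) := by
  ext v u
  rcases eq_or_ne v u with rfl | h
  · simp [distLap, distMatrix, transmission, Finset.sum_sub_distrib]
  · simp only [distLap, Matrix.sub_apply, diagonal_apply_ne _ h]
    ring

theorem dotProduct_distLap_mulVec_le {G G' : SimpleGraph V} (hle : G' ≤ G) (hconn : G'.Connected)
    (x : V → ℝ) : x ⬝ᵥ distLap G *ᵥ x ≤ x ⬝ᵥ distLap G' *ᵥ x := by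
  have hW : (distMatrix G' - distMatrix G).IsSymm := by
    ext u v
    simp [distMatrix, SimpleGraph.dist_comm]
  have hW₀ : ∀ u v, 0 ≤ (distMatrix G' - distMatrix G) u v := fun u v => by
    simpa [distMatrix] using (hconn.preconnected u v).dist_anti hle
  have := dotProduct_diagonal_sum_sub_mulVec_nonneg hW hW₀ x
  rwa [← distLap_sub_distLap, sub_mulVec, dotProduct_sub, sub_nonneg] at this

theorem Matrix.dotProduct_mul_mul_transpose_mulVec {ι R : Type*} [Fintype ι] [CommSemiring R]
    (U M : Matrix ι ι R) (x : ι → R) :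
    x ⬝ᵥ (U * M * Uᵀ) *ᵥ x = (Uᵀ *ᵥ x) ⬝ᵥ M *ᵥ (Uᵀ *ᵥ x) := by
  rw [← mulVec_mulVec, ← mulVec_mulVec, dotProduct_mulVec, mulVec_transpose]

theorem LinearMap.exists_ne_zero_forall_apply_eq_zero {K M ι κ : Type*} [Field K]
    [AddCommGroup M] [Module K M] [FiniteDimensional K M] (f : M →ₗ[K] ι → K) (g : M →ₗ[K] κ → K)
    (s : Finset ι) (t : Finset κ) (hcard : #s + #t < Module.finrank K M) :
    ∃ x ≠ 0, (∀ i ∈ s, f x i = 0) ∧ ∀ j ∈ t, g x j = 0 := by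
  let L := (funLeft K K ((↑) : s → ι) ∘ₗ f).prod (funLeft K K ((↑) : t → κ) ∘ₗ g)
  obtain ⟨x, hx, hx0⟩ := (Submodule.ne_bot_iff _).mp (ker_ne_bot_of_finrank_lt (f := L)
    (by simpa using hcard))
  simp only [mem_ker, L, prod_apply, Function.prod, Prod.mk_eq_zero, funext_iff, coe_comp,
    Function.comp_apply, funLeft_apply] at hx
  exact ⟨x, hx0, fun i hi => hx.1 ⟨i, hi⟩, fun j hj => hx.2 ⟨j, hj⟩⟩

namespace Matrix.IsHermitian

variable {ι : Type*} [Fintype ι] [DecidableEq ι] {A : Matrix ι ι ℝ} (hA : A.IsHermitian)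

theorem eigenvectorUnitary_mul_diagonal_mul_transpose :
    (hA.eigenvectorUnitary : Matrix ι ι ℝ) * diagonal hA.eigenvalues
      * (hA.eigenvectorUnitary : Matrix ι ι ℝ)ᵀ = A := by
  conv_rhs => rw [hA.spectral_theorem, Unitary.conjStarAlgAut_apply]
  simp [star_eq_conjTranspose]

theorem eigenvectorUnitary_mul_transpose :
    (hA.eigenvectorUnitary : Matrix ι ι ℝ) * (hA.eigenvectorUnitary : Matrix ι ι ℝ)ᵀ = 1 := by
  simpa [star_eq_conjTranspose] using Unitary.coe_mul_star_self hA.eigenvectorUnitary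

theorem dotProduct_mulVec_eq_sum (x : ι → ℝ) :
    x ⬝ᵥ A *ᵥ x =
      ∑ j, hA.eigenvalues j * ((hA.eigenvectorUnitary : Matrix ι ι ℝ)ᵀ *ᵥ x) j ^ 2 := by
  conv_lhs => rw [← hA.eigenvectorUnitary_mul_diagonal_mul_transpose]
  rw [dotProduct_mul_mul_transpose_mulVec]
  simp only [dotProduct, mulVec_diagonal]
  exact Finset.sum_congr rfl fun j _ => by ring

theorem dotProduct_self_eq_sum (x : ι → ℝ) :
    x ⬝ᵥ x = ∑ j, ((hA.eigenvectorUnitary : Matrix ι ι ℝ)ᵀ *ᵥ x) j ^ 2 := by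
  have h := dotProduct_mul_mul_transpose_mulVec (hA.eigenvectorUnitary : Matrix ι ι ℝ) 1 x
  rw [mul_one, hA.eigenvectorUnitary_mul_transpose, one_mulVec, one_mulVec] at h
  rw [h, dotProduct]
  simp only [sq]

theorem mul_dotProduct_self_le {μ : ℝ} {x : ι → ℝ}
    (hx : ∀ j, hA.eigenvalues j < μ → ((hA.eigenvectorUnitary : Matrix ι ι ℝ)ᵀ *ᵥ x) j = 0) :
    μ * (x ⬝ᵥ x) ≤ x ⬝ᵥ A *ᵥ x := by
  rw [hA.dotProduct_self_eq_sum, hA.dotProduct_mulVec_eq_sum, Finset.mul_sum]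
  refine Finset.sum_le_sum fun j _ => ?_
  rcases lt_or_ge (hA.eigenvalues j) μ with hlt | hge
  · simp [hx j hlt]
  · exact mul_le_mul_of_nonneg_right hge (sq_nonneg _)

theorem dotProduct_mulVec_le_mul {μ : ℝ} {x : ι → ℝ}
    (hx : ∀ j, μ < hA.eigenvalues j → ((hA.eigenvectorUnitary : Matrix ι ι ℝ)ᵀ *ᵥ x) j = 0) :
    x ⬝ᵥ A *ᵥ x ≤ μ * (x ⬝ᵥ x) := by
  rw [hA.dotProduct_self_eq_sum, hA.dotProduct_mulVec_eq_sum, Finset.mul_sum]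
  refine Finset.sum_le_sum fun j _ => ?_
  rcases lt_or_ge μ (hA.eigenvalues j) with hlt | hle
  · simp [hx j hlt]
  · exact mul_le_mul_of_nonneg_right hle (sq_nonneg _)

end Matrix.IsHermitian

theorem IsSpectrum.le_of_forall_dotProduct_mulVec_le {n : ℕ} {A B : Matrix (Fin n) (Fin n) ℝ}
    {ρ ρ' : Fin n → ℝ} (hρ : IsSpectrum A ρ) (hρ' : IsSpectrum B ρ')
    (hAB : ∀ x, x ⬝ᵥ A *ᵥ x ≤ x ⬝ᵥ B *ᵥ x) (i : Fin n) : ρ i ≤ ρ' i := by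
  obtain ⟨hanti, hA, e, hρe⟩ := hρ
  obtain ⟨hanti', hB, e', hρe'⟩ := hρ'
  -- Courant–Fischer: the eigenvectors of `A` for `ρ 0, …, ρ i` and those of `B` for
  -- `ρ' i, …, ρ' (n - 1)` span subspaces of dimensions `i + 1` and `n - i`, which must meet.
  obtain ⟨x, hx0, hxA, hxB⟩ := LinearMap.exists_ne_zero_forall_apply_eq_zero
    (hA.eigenvectorUnitary : Matrix (Fin n) (Fin n) ℝ)ᵀ.mulVecLin
    (hB.eigenvectorUnitary : Matrix (Fin n) (Fin n) ℝ)ᵀ.mulVecLin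
    ((Finset.Ioi i).map e.toEmbedding) ((Finset.Iio i).map e'.toEmbedding)
    (by simp only [card_map, Fin.card_Ioi, Fin.card_Iio, Module.finrank_fin_fun]; omega)
  have hlow : ρ i * (x ⬝ᵥ x) ≤ x ⬝ᵥ A *ᵥ x := hA.mul_dotProduct_self_le fun j hj => by
    refine hxA j (Finset.mem_map_equiv.mpr (Finset.mem_Ioi.mpr (hanti.reflect_lt ?_)))
    rwa [hρe (e.symm j), Equiv.apply_symm_apply]
  have hup : x ⬝ᵥ B *ᵥ x ≤ ρ' i * (x ⬝ᵥ x) := hB.dotProduct_mulVec_le_mul fun j hj => by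
    refine hxB j (Finset.mem_map_equiv.mpr (Finset.mem_Iio.mpr (hanti'.reflect_lt ?_)))
    rwa [hρe' (e'.symm j), Equiv.apply_symm_apply]
  have hpos : 0 < x ⬝ᵥ x := by simpa using dotProduct_self_star_pos_iff.mpr hx0
  exact le_of_mul_le_mul_right (hlow.trans ((hAB x).trans hup)) hpos

theorem stmt8_general {n : ℕ} (G : SimpleGraph (Fin n))
    (e : Sym2 (Fin n))
    (G' : SimpleGraph (Fin n)) (hG' : G' = G.deleteEdges {e}) (hconn' : G'.Connected)
    (ρ ρ' : Fin n → ℝ)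
    (hρ : IsSpectrum (distLap G) ρ) (hρ' : IsSpectrum (distLap G') ρ') :
    ∀ i, ρ i ≤ ρ' i :=
  hρ.le_of_forall_dotProduct_mulVec_le hρ'
    (dotProduct_distLap_mulVec_le (hG' ▸ G.deleteEdges_le {e}) hconn')

theorem stmt8 {n : ℕ} (G : SimpleGraph (Fin n)) [DecidableRel G.Adj] (hconn : G.Connected)
    (hm : n ≤ G.edgeFinset.card)
    (e : Sym2 (Fin n)) (he : e ∈ G.edgeSet)
    (G' : SimpleGraph (Fin n)) (hG' : G' = G.deleteEdges {e}) (hconn' : G'.Connected)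
    (ρ ρ' : Fin n → ℝ)
    (hρ : IsSpectrum (distLap G) ρ) (hρ' : IsSpectrum (distLap G') ρ') :
    ∀ i, ρ i ≤ ρ' i :=
  stmt8_general G e G' hG' hconn' ρ ρ' hρ hρ'
end
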